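/- Let (R_i, t_i) be a perfectoid tower arising from (R_0, I_0). Then for every j ≥ 0 the projection Φ^{(j)}_0 induces a ring isomorphism R_j^{s♭}/I_0^{s♭}R_j^{s♭} ≅ R_j/I_0R_j (in particular ker Φ^{(j)}_0 = I_0^{s♭}R_j^{s♭}), and these isomorphisms are compatible with the transition maps, i.e., they intertwine the maps induced by t_j^{s♭} and by t_j on the respective quotients. -/

import Mathlib

set_option synthInstance.maxHeartbeats 1000000
set_option maxHeartbeats 1000000
universe u

namespace PaperTower

variable {R : ℕ → Type u} [∀ i, CommRing (R i)]

/-- The set of `J`-torsion elements of a commutative ring. -/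
def torSet {A : Type*} [CommRing A] (J : Ideal A) : Set A :=
  {x | ∀ a ∈ J, ∃ n : ℕ, 0 < n ∧ a ^ n * x = 0}

/-- Cast ring homomorphism between quotients at equal indices. -/
def qcast (I : ∀ i, Ideal (R i)) {m n : ℕ} (h : m = n) :
    (R m ⧸ I m) →+* (R n ⧸ I n) := by subst h; exact RingHom.id _

/-- The `j`-th small tilt (inverse quasi-perfection) of a tower, as a subring of the
product of the quotients, consisting of sequences compatible with the Frobenius
projections `F`. -/
def Tilt (I : ∀ i, Ideal (R i))
    (F : ∀ i, (R (i + 1) ⧸ I (i + 1)) →+* (R i ⧸ I i)) (j : ℕ) :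
    Subring (∀ i, R (j + i) ⧸ I (j + i)) where
  carrier := {a | ∀ i, F (j + i) (a (i + 1)) = a i}
  zero_mem' := by
    intro i
    show F (j + i) 0 = 0
    simp
  one_mem' := by
    intro i
    show F (j + i) 1 = 1
    simp
  add_mem' := by
    intro a b ha hb i
    show F (j + i) (a (i + 1) + b (i + 1)) = a i + b i
    rw [map_add, ha i, hb i]
  mul_mem' := by
    intro a b ha hb i
    show F (j + i) (a (i + 1) * b (i + 1)) = a i * b i
    rw [map_mul, ha i, hb i]
  neg_mem' := by
    intro a ha i
    show F (j + i) (-(a (i + 1))) = -(a i)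
    rw [map_neg, ha i]

/-- The `m`-th projection `Φ^{(j)}_m` from the `j`-th small tilt. -/
def proj (I : ∀ i, Ideal (R i))
    (F : ∀ i, (R (i + 1) ⧸ I (i + 1)) →+* (R i ⧸ I i)) (j m : ℕ) :
    Tilt I F j →+* (R (j + m) ⧸ I (j + m)) :=
  (Pi.evalRingHom _ m).comp (Tilt I F j).subtype


lemma zero_mem_torSet {A : Type*} [CommRing A] (J : Ideal A) : (0 : A) ∈ torSet J :=
  fun a _ => ⟨1, one_pos, by simp⟩

lemma eq_zero_of_mem_torSet_mem {A : Type*} [CommRing A] {J : Ideal A}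
    (hprin : J.IsPrincipal)
    (htz : ∀ a ∈ J, ∀ x ∈ torSet J, a * x = 0)
    {τ : A} (hτt : τ ∈ torSet J) (hτI : τ ∈ J) : τ = 0 := by
  obtain ⟨h, hh⟩ := hprin.principal
  rw [hh] at hτI
  obtain ⟨r, hr⟩ := Ideal.mem_span_singleton'.mp hτI
  have hmem : h ∈ J := by rw [hh]; exact Ideal.subset_span rfl
  have h1 : h * τ = 0 := htz h hmem τ hτt
  have h2 : h ^ 2 * r = 0 := by linear_combination h * hr + h1
  have hrtor : r ∈ torSet J := by
    intro a ha
    rw [hh] at ha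
    obtain ⟨s, hs⟩ := Ideal.mem_span_singleton'.mp ha
    refine ⟨2, by norm_num, ?_⟩
    rw [← hs]
    linear_combination s ^ 2 * h2
  have h3 : h * r = 0 := htz h hmem r hrtor
  rw [← hr]; linear_combination h3

/-- For a perfectoid tower, the projection `Φ^{(j)}_0` induces a ring
isomorphism `R_j^{s♭}/I₀^{s♭}R_j^{s♭} ≅ R_j/I₀R_j` (i.e. it is surjective with kernel
`I₀^{s♭}R_j^{s♭}`), compatibly with the transition maps. -/
theorem stmt16 (p : ℕ) (hp : p.Prime)
    (R : ℕ → Type u) [∀ i, CommRing (R i)]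
    (t : ∀ i, R i →+* R (i + 1))
    (I : ∀ i, Ideal (R i))
    (hpI : (p : R 0) ∈ I 0)
    (hIsucc : ∀ i, I (i + 1) = (I i).map (t i))
    (tbar : ∀ i, (R i ⧸ I i) →+* (R (i + 1) ⧸ I (i + 1)))
    (htbar : ∀ i (x : R i),
      tbar i (Ideal.Quotient.mk (I i) x) = Ideal.Quotient.mk (I (i + 1)) (t i x))
    (htbarInj : ∀ i, Function.Injective (tbar i))
    (F : ∀ i, (R (i + 1) ⧸ I (i + 1)) →+* (R i ⧸ I i))
    (hF : ∀ i (x : R (i + 1) ⧸ I (i + 1)), tbar i (F i x) = x ^ p)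
    (hFsurj : ∀ i, Function.Surjective (F i))
    (hJac : ∀ i, I i ≤ (⊥ : Ideal (R i)).jacobson)
    (hI0prin : (I 0).IsPrincipal)
    (I1e : ∀ i, Ideal (R (i + 1)))
    (hI1prin : (I1e 0).IsPrincipal)
    (hI1pow : I1e 0 ^ p = I 1)
    (hI1es : ∀ i, I1e (i + 1) = (I1e i).map (t (i + 1)))
    (hkerF : ∀ i, RingHom.ker (F i) = (I1e i).map (Ideal.Quotient.mk (I (i + 1))))
    (htorz : ∀ i, ∀ a ∈ I i, ∀ x ∈ torSet (I i), a * x = 0)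
    (hFtor : ∀ i, ∃ G : torSet (I (i + 1)) → torSet (I i), Function.Bijective G ∧
      ∀ x : torSet (I (i + 1)),
        Ideal.Quotient.mk (I i) (G x : R i) = F i (Ideal.Quotient.mk (I (i + 1)) (x : R (i + 1))))
    (ts : ∀ j, Tilt I F j →+* Tilt I F (j + 1))
    (hts : ∀ (j : ℕ) (a : Tilt I F j) (i : ℕ),
      (ts j a).1 i = qcast I (by omega : (j + i) + 1 = (j + 1) + i) (tbar (j + i) (a.1 i)))
    (tsc : ∀ j, Tilt I F 0 →+* Tilt I F j)
    (htsc0 : tsc 0 = RingHom.id _)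
    (htscS : ∀ j, tsc (j + 1) = (ts j).comp (tsc j))
    (j : ℕ) :
    RingHom.ker (proj I F j 0) = (RingHom.ker (proj I F 0 0)).map (tsc j) ∧
    Function.Surjective (proj I F j 0) ∧
    (∃ e : (Tilt I F j ⧸ (RingHom.ker (proj I F 0 0)).map (tsc j)) ≃+* (R j ⧸ I j),
      ∀ x : Tilt I F j,
        e (Ideal.Quotient.mk ((RingHom.ker (proj I F 0 0)).map (tsc j)) x) = proj I F j 0 x) ∧
    (∀ x : Tilt I F j, proj I F (j + 1) 0 (ts j x) = tbar j (proj I F j 0 x)) := by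

  classical
  -- torsion bijections
  choose G hGbij hGspec using hFtor
  -- generator of I1e 0
  obtain ⟨f, hf⟩ := hI1prin.principal
  -- the compatible system of generators g_ℓ ∈ R (ℓ+1)
  obtain ⟨gs, hgs0, hgsS⟩ :
      ∃ gs : ∀ ℓ, R (ℓ + 1), gs 0 = f ∧ ∀ ℓ, gs (ℓ + 1) = t (ℓ + 1) (gs ℓ) :=
    ⟨fun ℓ => Nat.rec f (fun ℓ ih => t (ℓ + 1) ih) ℓ, rfl, fun _ => rfl⟩
  have hI1span : ∀ ℓ, I1e ℓ = Ideal.span {gs ℓ} := by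
    intro ℓ
    induction ℓ with
    | zero => rw [hgs0]; exact hf
    | succ ℓ ih => rw [hI1es, ih, Ideal.map_span, Set.image_singleton, hgsS]
  have hIspanpow : ∀ ℓ, I (ℓ + 1) = Ideal.span {gs ℓ} ^ p := by
    intro ℓ
    induction ℓ with
    | zero => rw [← hI1span 0]; exact hI1pow.symm
    | succ ℓ ih =>
      rw [hIsucc (ℓ + 1), ih, Ideal.map_pow, Ideal.map_span, Set.image_singleton, hgsS]
  have hIprin : ∀ ℓ, (I ℓ).IsPrincipal := by
    intro ℓ
    cases ℓ with
    | zero => exact hI0prin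
    | succ ℓ => exact ⟨⟨gs ℓ ^ p, by
        rw [hIspanpow ℓ, Ideal.span_singleton_pow]⟩⟩
  have hgp : ∀ ℓ, gs ℓ ^ p ∈ I (ℓ + 1) := by
    intro ℓ
    rw [hIspanpow ℓ]
    exact Ideal.pow_mem_pow (Ideal.mem_span_singleton_self (gs ℓ)) p
  have hmkgp : ∀ ℓ, (Ideal.Quotient.mk (I (ℓ + 1)) (gs ℓ)) ^ p = 0 := by
    intro ℓ
    rw [← map_pow]
    exact Ideal.Quotient.eq_zero_iff_mem.mpr (hgp ℓ)
  have htor0 : ∀ ℓ (τ : R ℓ), τ ∈ torSet (I ℓ) → τ ∈ I ℓ → τ = 0 := fun ℓ τ h1 h2 =>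
    eq_zero_of_mem_torSet_mem (hIprin ℓ) (htorz ℓ) h1 h2
  have hG0 : ∀ ℓ, G ℓ ⟨0, zero_mem_torSet _⟩ = ⟨0, zero_mem_torSet _⟩ := by
    intro ℓ
    have h := hGspec ℓ ⟨0, zero_mem_torSet _⟩
    simp only [map_zero] at h
    apply Subtype.ext
    exact htor0 ℓ _ (G ℓ ⟨0, zero_mem_torSet _⟩).2
      (Ideal.Quotient.eq_zero_iff_mem.mp h)
  -- kernel of F ℓ is generated by the class of gs ℓ
  have hkermul : ∀ ℓ (x : R (ℓ + 1) ⧸ I (ℓ + 1)), F ℓ x = 0 →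
      ∃ c, x = Ideal.Quotient.mk (I (ℓ + 1)) (gs ℓ) * c := by
    intro ℓ x hx
    have hx' : x ∈ RingHom.ker (F ℓ) := hx
    rw [hkerF, hI1span, Ideal.map_span, Set.image_singleton] at hx'
    obtain ⟨c, hc⟩ := Ideal.mem_span_singleton.mp hx'
    exact ⟨c, hc⟩
  have hmkgsker : ∀ ℓ, F ℓ (Ideal.Quotient.mk (I (ℓ + 1)) (gs ℓ)) = 0 := by
    intro ℓ
    have : Ideal.Quotient.mk (I (ℓ + 1)) (gs ℓ) ∈ RingHom.ker (F ℓ) := by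
      rw [hkerF, hI1span]
      exact Ideal.mem_map_of_mem _ (Ideal.subset_span rfl)
    exact this
  -- tilt power relation
  have htiltpow : ∀ (jj : ℕ) (x : Tilt I F jj) (i : ℕ),
      (x.1 (i + 1)) ^ p = tbar (jj + i) (x.1 i) := by
    intro jj x i
    have h := hF (jj + i) (x.1 (i + 1))
    rw [x.2 i] at h
    exact h.symm
  -- the element b of the 0-th tilt with b₀ = 0, b₁ = mk (gs 0)
  obtain ⟨bseq, hb0, hb1, hbS⟩ :
      ∃ bseq : ∀ i, R (0 + i) ⧸ I (0 + i),
        bseq 0 = 0 ∧ bseq 1 = Ideal.Quotient.mk (I (0 + 1)) (gs 0) ∧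
        ∀ i, F (0 + i) (bseq (i + 1)) = bseq i := by
    refine ⟨fun i => Nat.rec (motive := fun i => R (0 + i) ⧸ I (0 + i)) 0
      (fun i ih =>
        Nat.rec (motive := fun i => (R (0 + i) ⧸ I (0 + i)) → (R (0 + (i + 1)) ⧸ I (0 + (i + 1))))
          (fun _ => Ideal.Quotient.mk (I (0 + 1)) (gs 0))
          (fun i _ ih' => Classical.choose (hFsurj (0 + (i + 1)) ih')) i ih) i,
      rfl, rfl, ?_⟩
    intro i
    cases i with
    | zero => exact hmkgsker 0
    | succ k => exact Classical.choose_spec (hFsurj (0 + (k + 1)) _)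
  set bt : Tilt I F 0 := ⟨bseq, hbS⟩ with hbt
  have hbK : bt ∈ RingHom.ker (proj I F 0 0) := hb0
  -- components of tsc jj y
  have htsc_comp0 : ∀ (y : Tilt I F 0), y.1 0 = 0 → ∀ jj, (tsc jj y).1 0 = 0 := by
    intro y hy jj
    induction jj with
    | zero => rw [htsc0]; exact hy
    | succ jj ih =>
      rw [htscS]
      show (ts jj (tsc jj y)).1 0 = 0
      rw [hts jj (tsc jj y) 0, ih]
      simp
  have hBT1' : ∀ jj, (tsc jj bt).1 1 = Ideal.Quotient.mk (I (jj + 1)) (gs jj) := by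
    intro jj
    induction jj with
    | zero => rw [htsc0]; exact hb1
    | succ jj ih =>
      rw [htscS]
      show (ts jj (tsc jj bt)).1 1 = _
      rw [hts jj (tsc jj bt) 1, ih, htbar, ← hgsS]
      rfl
  set B : Tilt I F j := tsc j bt with hBdef
  have hBT0 : B.1 0 = 0 := htsc_comp0 bt hb0 j
  have hBT1 : B.1 1 = Ideal.Quotient.mk (I (j + 1)) (gs j) := hBT1' j
  have hB2 : ∀ i, F (j + i) (B.1 (i + 1)) = B.1 i := fun i => B.2 i
  have ha2' : ∀ (x : Tilt I F j) (i : ℕ), F (j + i) (x.1 (i + 1)) = x.1 i := fun x i => x.2 i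
  have hBpow : ∀ i, (B.1 (i + 1)) ^ (p ^ i)
      = Ideal.Quotient.mk (I (j + (i + 1))) (gs (j + i)) := by
    intro i
    induction i with
    | zero => rw [pow_zero, pow_one]; exact hBT1
    | succ i ih =>
      calc B.1 (i + 1 + 1) ^ p ^ (i + 1)
          = (B.1 (i + 1 + 1) ^ p) ^ p ^ i := by rw [← pow_mul, pow_succ']
        _ = (tbar (j + (i + 1)) (B.1 (i + 1))) ^ p ^ i := by rw [htiltpow j B (i + 1)]
        _ = tbar (j + (i + 1)) (B.1 (i + 1) ^ p ^ i) := (map_pow _ _ _).symm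
        _ = tbar (j + (i + 1)) (Ideal.Quotient.mk (I (j + (i + 1))) (gs (j + i))) := by rw [ih]
        _ = Ideal.Quotient.mk (I (j + (i + 1) + 1)) (t (j + (i + 1)) (gs (j + i))) :=
            htbar (j + (i + 1)) (gs (j + i))
        _ = Ideal.Quotient.mk (I (j + (i + 1 + 1))) (gs (j + (i + 1))) :=
            congrArg _ (hgsS (j + i)).symm
  have hBzero : ∀ i, (B.1 i) ^ (p ^ i) = 0 := by
    intro i
    cases i with
    | zero => rw [hBT0, pow_zero, pow_one]
    | succ i =>
      have h1 : (B.1 (i + 1)) ^ (p ^ (i + 1)) = ((B.1 (i + 1)) ^ (p ^ i)) ^ p := by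
        rw [← pow_mul, pow_succ]
      rw [h1, hBpow i]
      exact hmkgp (j + i)
  have hkerB : ∀ i (x : R (j + (i + 1)) ⧸ I (j + (i + 1))), F (j + i) x = 0 →
      ∃ c, x = (B.1 (i + 1)) ^ (p ^ i) * c := by
    intro i x hx
    obtain ⟨c, hc⟩ := hkermul (j + i) x hx
    exact ⟨c, by rw [hBpow i]; exact hc⟩
  -- aligned surjectivity and torsion helpers
  have hFsurj' : ∀ (i : ℕ) (y : R (j + (i + 1)) ⧸ I (j + (i + 1))),
      ∃ x : R (j + (i + 1 + 1)) ⧸ I (j + (i + 1 + 1)), F (j + (i + 1)) x = y :=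
    fun i y => hFsurj (j + (i + 1)) y
  have hGsurj' : ∀ (i : ℕ) (τ : torSet (I (j + (i + 1)))),
      ∃ τ' : torSet (I (j + (i + 1 + 1))), G (j + (i + 1)) τ' = τ :=
    fun i τ => (hGbij (j + (i + 1))).2 τ
  have hGspec' : ∀ (i : ℕ) (x : torSet (I (j + (i + 1)))),
      F (j + i) (Ideal.Quotient.mk (I (j + (i + 1))) x.1)
        = Ideal.Quotient.mk (I (j + i)) (G (j + i) x).1 :=
    fun i x => (hGspec (j + i) x).symm
  -- THE HARD INCLUSION
  have hker_sub : ∀ x : Tilt I F j, x.1 0 = 0 →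
      x ∈ Ideal.map (tsc j) (RingHom.ker (proj I F 0 0)) := by
    intro a ha0
    have ha2 : ∀ i, F (j + i) (a.1 (i + 1)) = a.1 i := ha2' a
    -- lifting lemma
    have lift : ∀ (i : ℕ) (c : R (j + (i + 1)) ⧸ I (j + (i + 1))) (τ : torSet (I (j + (i + 1)))),
        B.1 (i + 1) * c + Ideal.Quotient.mk (I (j + (i + 1))) τ.1 = a.1 (i + 1) →
        ∃ (c' : R (j + (i + 1 + 1)) ⧸ I (j + (i + 1 + 1))) (τ' : torSet (I (j + (i + 1 + 1))))
          (δ : R (j + (i + 1)) ⧸ I (j + (i + 1))),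
          B.1 (i + 1 + 1) * c' + Ideal.Quotient.mk (I (j + (i + 1 + 1))) τ'.1 = a.1 (i + 1 + 1) ∧
          F (j + (i + 1)) c' = c + δ ∧ G (j + (i + 1)) τ' = τ ∧ F (j + i) δ = 0 := by
      intro i c τ hc
      obtain ⟨τ', hτ'⟩ := hGsurj' i τ
      obtain ⟨c₀, hc₀⟩ := hFsurj' i c
      have hw : F (j + (i + 1))
          (a.1 (i + 1 + 1) - B.1 (i + 1 + 1) * c₀
            - Ideal.Quotient.mk (I (j + (i + 1 + 1))) τ'.1) = 0 := by
        rw [map_sub, map_sub, map_mul, ha2 (i + 1), hB2 (i + 1), hc₀,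
          hGspec' (i + 1) τ', hτ', ← hc]
        ring
      obtain ⟨d, hd⟩ := hkerB (i + 1) _ hw
      have hq1 : 1 ≤ p ^ (i + 1) := Nat.one_le_pow _ _ hp.pos
      have hple : p ^ i + 1 ≤ p ^ (i + 1) := by
        have h1 : 1 ≤ p ^ i := Nat.one_le_pow _ _ hp.pos
        calc p ^ i + 1 ≤ p ^ i + p ^ i := by omega
          _ = p ^ i * 2 := by ring
          _ ≤ p ^ i * p := Nat.mul_le_mul_left _ hp.two_le
          _ = p ^ (i + 1) := (pow_succ p i).symm
      refine ⟨c₀ + (B.1 (i + 1 + 1)) ^ (p ^ (i + 1) - 1) * d, τ',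
        (B.1 (i + 1)) ^ (p ^ (i + 1) - 1) * F (j + (i + 1)) d, ?_, ?_, hτ', ?_⟩
      · have hsub : (B.1 (i + 1 + 1)) ^ (p ^ (i + 1) - 1) * B.1 (i + 1 + 1)
            = (B.1 (i + 1 + 1)) ^ (p ^ (i + 1)) := by
          rw [← pow_succ, Nat.sub_add_cancel hq1]
        linear_combination d * hsub - hd
      · rw [map_add, map_mul, map_pow, hB2 (i + 1), hc₀]
      · have hzero : (B.1 i) ^ (p ^ (i + 1) - 1) = 0 := by
          have hsplit : p ^ i + (p ^ (i + 1) - 1 - p ^ i) = p ^ (i + 1) - 1 := by omega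
          calc (B.1 i) ^ (p ^ (i + 1) - 1)
              = (B.1 i) ^ (p ^ i) * (B.1 i) ^ (p ^ (i + 1) - 1 - p ^ i) := by
                rw [← pow_add, hsplit]
            _ = 0 := by rw [hBzero i, zero_mul]
        rw [map_mul, map_pow, hB2 i, hzero, zero_mul]
    -- pushing an equation one level down
    have push : ∀ (i : ℕ) (c' : R (j + (i + 1 + 1)) ⧸ I (j + (i + 1 + 1)))
        (τ' : torSet (I (j + (i + 1 + 1)))),
        B.1 (i + 1 + 1) * c' + Ideal.Quotient.mk (I (j + (i + 1 + 1))) τ'.1 = a.1 (i + 1 + 1) →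
        B.1 (i + 1) * (F (j + (i + 1)) c')
          + Ideal.Quotient.mk (I (j + (i + 1))) (G (j + (i + 1)) τ').1 = a.1 (i + 1) := by
      intro i c' τ' h
      have h2 := congrArg (F (j + (i + 1))) h
      rw [map_add, map_mul, ha2 (i + 1), hB2 (i + 1), hGspec' (i + 1) τ'] at h2
      exact h2
    -- base: a level-1 pair
    have base0 : ∃ (c : R (j + (0 + 1)) ⧸ I (j + (0 + 1))) (τ : torSet (I (j + (0 + 1)))),
        B.1 (0 + 1) * c + Ideal.Quotient.mk (I (j + (0 + 1))) τ.1 = a.1 (0 + 1) := by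
      have ha1 : F (j + 0) (a.1 (0 + 1)) = 0 := (ha2 0).trans ha0
      obtain ⟨c, hc⟩ := hkerB 0 (a.1 (0 + 1)) ha1
      rw [pow_zero, pow_one] at hc
      refine ⟨c, ⟨0, zero_mem_torSet _⟩, ?_⟩
      simpa using hc.symm
    -- the chain type
    let T : ℕ → Type _ := fun i =>
      {q : (R (j + (i + 1)) ⧸ I (j + (i + 1))) × torSet (I (j + (i + 1))) //
        (B.1 (i + 1) * q.1 + Ideal.Quotient.mk (I (j + (i + 1))) q.2.1 = a.1 (i + 1)) ∧
        ∃ q' : (R (j + (i + 1 + 1)) ⧸ I (j + (i + 1 + 1))) × torSet (I (j + (i + 1 + 1))),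
          (B.1 (i + 1 + 1) * q'.1 + Ideal.Quotient.mk (I (j + (i + 1 + 1))) q'.2.1
            = a.1 (i + 1 + 1)) ∧
          F (j + (i + 1)) q'.1 = q.1 ∧ G (j + (i + 1)) q'.2 = q.2}
    have base'ex : ∃ _ : T 0, True := by
      obtain ⟨c, τ, hc⟩ := base0
      obtain ⟨c', τ', δ, h1, h2, h3, _⟩ := lift 0 c τ hc
      exact ⟨⟨(F (j + (0 + 1)) c', G (j + (0 + 1)) τ'), push 0 c' τ' h1,
        ⟨(c', τ'), h1, rfl, rfl⟩⟩, trivial⟩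
    have step' : ∀ i (v : T i), ∃ w : T (i + 1),
        F (j + (i + 1)) w.1.1 = v.1.1 ∧ G (j + (i + 1)) w.1.2 = v.1.2 := by
      intro i v
      obtain ⟨⟨c, τ⟩, heq, ⟨c', τ'⟩, heq', hFc', hGτ'⟩ := v
      obtain ⟨c'', τ'', δ, h1, h2, h3, h4⟩ := lift (i + 1) c' τ' heq'
      refine ⟨⟨(F (j + (i + 1 + 1)) c'', G (j + (i + 1 + 1)) τ''),
        push (i + 1) c'' τ'' h1, ⟨(c'', τ''), h1, rfl, rfl⟩⟩, ?_, ?_⟩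
      · show F (j + (i + 1)) (F (j + (i + 1 + 1)) c'') = c
        rw [h2, map_add, hFc', h4, add_zero]
      · show G (j + (i + 1)) (G (j + (i + 1 + 1)) τ'') = τ
        rw [h3, hGτ']
    let ch : ∀ i, T i := fun i => Nat.rec base'ex.choose (fun i v => Classical.choose (step' i v)) i
    have chS : ∀ i, F (j + (i + 1)) (ch (i + 1)).1.1 = (ch i).1.1 ∧
        G (j + (i + 1)) (ch (i + 1)).1.2 = (ch i).1.2 :=
      fun i => Classical.choose_spec (step' i (ch i))
    -- assemble full sequences
    let Cc : ∀ i, R (j + i) ⧸ I (j + i) := fun i =>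
      Nat.rec (motive := fun i => R (j + i) ⧸ I (j + i))
        (F (j + 0) (ch 0).1.1) (fun i _ => (ch i).1.1) i
    let τt : ∀ i, torSet (I (j + i)) := fun i =>
      Nat.rec (motive := fun i => torSet (I (j + i)))
        (G (j + 0) (ch 0).1.2) (fun i _ => (ch i).1.2) i
    have hCeq : ∀ i, B.1 i * Cc i + Ideal.Quotient.mk (I (j + i)) (τt i).1 = a.1 i := by
      intro i
      match i with
      | 0 =>
        have h := congrArg (F (j + 0)) (ch 0).2.1
        rw [map_add, map_mul, ha2 0, hB2 0, hGspec' 0 (ch 0).1.2] at h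
        exact h
      | Nat.succ i => exact (ch i).2.1
    have hCF : ∀ i, F (j + i) (Cc (i + 1)) = Cc i := by
      intro i
      match i with
      | 0 => rfl
      | Nat.succ i => exact (chS i).1
    have hτG : ∀ i, G (j + i) (τt (i + 1)) = τt i := by
      intro i
      match i with
      | 0 => rfl
      | Nat.succ i => exact (chS i).2
    -- torsion components vanish
    have hτ0 : τt 0 = ⟨0, zero_mem_torSet _⟩ := by
      apply Subtype.ext
      have h := hCeq 0
      rw [ha0, hBT0, zero_mul, zero_add] at h
      exact htor0 (j + 0) _ (τt 0).2 (Ideal.Quotient.eq_zero_iff_mem.mp h)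
    have hτall : ∀ i, τt i = ⟨0, zero_mem_torSet _⟩ := by
      intro i
      induction i with
      | zero => exact hτ0
      | succ i ih =>
        apply (hGbij (j + i)).1
        rw [hτG i, ih, hG0 (j + i)]
    have hfinal : ∀ i, a.1 i = B.1 i * Cc i := by
      intro i
      have h := hCeq i
      rw [hτall i] at h
      simpa using h.symm
    have haeq : a = B * (⟨Cc, hCF⟩ : Tilt I F j) := by
      apply Subtype.ext
      funext i
      exact hfinal i
    rw [haeq]
    exact Ideal.mul_mem_right _ _ (Ideal.mem_map_of_mem _ hbK)
  -- kernel equality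
  have hker : RingHom.ker (proj I F j 0) = Ideal.map (tsc j) (RingHom.ker (proj I F 0 0)) := by
    apply le_antisymm
    · intro x hx
      exact hker_sub x hx
    · rw [Ideal.map_le_iff_le_comap]
      intro y hy
      show proj I F j 0 (tsc j y) = 0
      exact htsc_comp0 y hy j
  -- surjectivity
  have hsurj : Function.Surjective (proj I F j 0) := by
    intro y
    refine ⟨⟨fun i => Nat.rec (motive := fun i => R (j + i) ⧸ I (j + i)) y
      (fun i ih => Classical.choose (hFsurj (j + i) ih)) i, fun i => ?_⟩, rfl⟩
    exact Classical.choose_spec (hFsurj (j + i) _)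
  refine ⟨hker, hsurj, ?_, ?_⟩
  · refine ⟨(Ideal.quotEquivOfEq hker.symm).trans
      (RingHom.quotientKerEquivOfSurjective hsurj), ?_⟩
    intro x
    rw [RingEquiv.trans_apply, Ideal.quotEquivOfEq_mk]
    exact RingHom.kerLift_mk (proj I F j 0) x
  · intro x
    exact (hts j x 0).trans rfl


end PaperTower
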